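/- arXiv:1611.00561 — 2 statements merged into one kernel-verified Lean document; each statement's English description precedes it below -/
import Mathlib

section
/- For a nonzero real number a, the function g(x) = exp(a x) on [0,1), and a nonnegative integer k with binary expansion k = Σ_{i=1}^{w} κ_i 2^{i-1} where κ_w = 1 (with w = 0 if k = 0), the k-th dyadic Walsh coefficient satisfies: ∫_0^1 exp(a x)·wal_k(x) dx = ((exp(a·2^{-w}) − 1)/a) · ∏_{i=1}^{w} (1 + (−1)^{κ_i} exp(a·2^{-i})). -/
open MeasureTheory

/-- The `i`-th binary digit (for `i ≥ 1`) of `x ∈ [0,1)` in the expansion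
`x = Σ_{i ≥ 1} x_i 2^{-i}` with infinitely many digits equal to `0`. -/
noncomputable def binDigit (x : ℝ) (i : ℕ) : ℕ := (⌊x * 2 ^ i⌋).toNat % 2

/-- The `k`-th dyadic Walsh function on `[0,1)`:
`wal_k(x) = (-1)^{Σ_{i ≥ 1} κ_i x_i}` where `k = Σ κ_i 2^{i-1}`. -/
noncomputable def walsh (k : ℕ) (x : ℝ) : ℝ :=
  ∏ i ∈ Finset.range k.size, if k.testBit i then (-1 : ℝ) ^ binDigit x (i + 1) else 1

/-- The `k`-th dyadic Walsh coefficient of `f : [0,1) → ℝ`. -/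
noncomputable def walshCoeff (f : ℝ → ℝ) (k : ℕ) : ℝ :=
  ∫ x in (0:ℝ)..1, f x * walsh k x

/-- `μ_u(k) = Σ_{i ≥ 1} (i + 1 - log₂ u) κ_i`, for the binary digits `κ_i` of `k`. -/
noncomputable def muWeight (u : ℝ) (k : ℕ) : ℝ :=
  ∑ i ∈ Finset.range k.size, if k.testBit i then ((i : ℝ) + 2 - Real.logb 2 u) else 0

/-- `A_u = (1 - exp (-u)) / u`. -/
noncomputable def Aconst (u : ℝ) : ℝ := (1 - Real.exp (-u)) / u

/-- `B_u = inf_{w ≥ 1} ((1-exp(-2^{-w}u))/(2^{-w}u)) ∏_{i=1}^w (1-exp(-2^{-i}u))/(2^{-i}u)`. -/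
noncomputable def Bconst (u : ℝ) : ℝ :=
  ⨅ w : {w : ℕ // 1 ≤ w},
    ((1 - Real.exp (-((2:ℝ) ^ (-((w:ℕ):ℤ)) * u))) / ((2:ℝ) ^ (-((w:ℕ):ℤ)) * u))
      * ∏ i ∈ Finset.Icc 1 (w : ℕ),
          (1 - Real.exp (-((2:ℝ) ^ (-(i:ℤ)) * u))) / ((2:ℝ) ^ (-(i:ℤ)) * u)

/-!
On the left half of `[0,1)` the first binary digit of `x` vanishes, on the right half it is `1`,
and in both cases the remaining digits of `x` are those of `2x mod 1`; so
`wal_{2k+b}(x) = (-1)^{b x₁} wal_k(2x - x₁)`. Rescaling both halves to `[0,1)` gives, for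
`g_a(x) = exp (a x)`, the recursion `ĝ_a(2k+b) = (1 + (-1)^b exp (a/2)) / 2 · ĝ_{a/2}(k)`, and
unrolling it `w` times down to `ĝ_{a 2^{-w}}(0) = (exp (a 2^{-w}) - 1) / (a 2^{-w})` yields the
product.
-/

open Set

theorem Finset.prod_Icc_one_eq_prod_range {M : Type*} [CommMonoid M] (f : ℕ → M) (n : ℕ) :
    ∏ i ∈ Finset.Icc 1 n, f i = ∏ i ∈ Finset.range n, f (i + 1) := by
  induction n with
  | zero => simp
  | succ n ih => rw [Finset.prod_Icc_succ_top (by omega), ih, Finset.prod_range_succ]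

theorem binDigit_two_mul (x : ℝ) (i : ℕ) : binDigit (2 * x) i = binDigit x (i + 1) := by
  rw [binDigit, binDigit, pow_succ', ← mul_assoc, mul_comm x]

theorem binDigit_add_one {x : ℝ} (hx : 0 ≤ x) (i : ℕ) :
    binDigit (x + 1) (i + 1) = binDigit x (i + 1) := by
  have hfloor : ⌊(x + 1) * 2 ^ (i + 1)⌋ = ⌊x * 2 ^ (i + 1)⌋ + ((2 * 2 ^ i : ℕ) : ℤ) := by
    rw [← Int.floor_add_natCast]; push_cast; ring_nf
  rw [binDigit, binDigit, hfloor, Int.toNat_add_nat (Int.floor_nonneg.2 (by positivity)),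
    Nat.add_mul_mod_self_left]

theorem binDigit_one_of_lt_half {x : ℝ} (hx₀ : 0 ≤ x) (hx : x < 1 / 2) : binDigit x 1 = 0 := by
  rw [binDigit, Int.floor_eq_zero_iff.2 ⟨by positivity, by linarith⟩]
  rfl

theorem binDigit_one_of_half_le {x : ℝ} (hx : 1 / 2 ≤ x) (hx₁ : x < 1) : binDigit x 1 = 1 := by
  rw [binDigit, (Int.floor_eq_iff (z := 1)).2 ⟨by push_cast; linarith, by push_cast; linarith⟩]
  rfl

theorem walsh_zero (x : ℝ) : walsh 0 x = 1 := by
  simp [walsh]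

theorem walsh_bit (b : Bool) (k : ℕ) (x : ℝ) :
    walsh (Nat.bit b k) x = (if b then (-1) ^ binDigit x 1 else 1) * walsh k (2 * x) := by
  by_cases h : Nat.bit b k = 0
  · obtain ⟨rfl, rfl⟩ := Nat.bit_eq_zero_iff.1 h
    simp [walsh_zero]
  rw [walsh, Nat.size_bit h, Finset.prod_range_succ', Nat.testBit_bit_zero, mul_comm, walsh]
  simp only [Nat.testBit_bit_succ, binDigit_two_mul]

theorem walsh_add_one (k : ℕ) {x : ℝ} (hx : 0 ≤ x) : walsh k (x + 1) = walsh k x := by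
  simp only [walsh, binDigit_add_one hx]

theorem measurable_binDigit (i : ℕ) : Measurable fun x => binDigit x i :=
  (measurable_from_top (f := fun n : ℤ => n.toNat % 2)).comp
    (Int.measurable_floor.comp (measurable_id.mul_const _))

theorem measurable_walsh (k : ℕ) : Measurable (walsh k) :=
  Finset.measurable_prod _ fun i _ => by
    split_ifs
    exacts [measurable_from_top.comp (measurable_binDigit _), measurable_const]

theorem norm_walsh (k : ℕ) (x : ℝ) : ‖walsh k x‖ = 1 := by
  rw [walsh, norm_prod]
  exact Finset.prod_eq_one fun i _ => by split_ifs <;> simp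

theorem IntervalIntegrable.mul_walsh {f : ℝ → ℝ} {a b : ℝ} (hf : IntervalIntegrable f volume a b)
    (k : ℕ) : IntervalIntegrable (fun x => f x * walsh k x) volume a b := by
  have hbdd : ∀ᵐ x ∂volume, ‖walsh k x‖ ≤ 1 := ae_of_all _ fun x => (norm_walsh k x).le
  exact ⟨hf.1.mul_bdd (measurable_walsh k).aestronglyMeasurable (ae_restrict_of_ae hbdd),
    hf.2.mul_bdd (measurable_walsh k).aestronglyMeasurable (ae_restrict_of_ae hbdd)⟩

theorem walshCoeff_bit {f : ℝ → ℝ} (hf : IntervalIntegrable f volume 0 1) (b : Bool) (k : ℕ) :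
    walshCoeff f (Nat.bit b k) =
      (walshCoeff (fun y => f (y / 2)) k
        + (if b then -1 else 1) * walshCoeff (fun y => f ((y + 1) / 2)) k) / 2 := by
  have hint := hf.mul_walsh (Nat.bit b k)
  have hleft : ∫ x in (0 : ℝ)..1 / 2, f x * walsh (Nat.bit b k) x
      = ∫ x in (0 : ℝ)..1 / 2, f (2 * x / 2) * walsh k (2 * x) := by
    refine intervalIntegral.integral_congr_Ioo_of_le (by norm_num) fun x hx => ?_
    rw [walsh_bit, binDigit_one_of_lt_half hx.1.le hx.2, mul_div_cancel_left₀ x two_ne_zero]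
    simp
  have hright : ∫ x in (1 / 2 : ℝ)..1, f x * walsh (Nat.bit b k) x
      = (if b then -1 else 1) *
          ∫ x in (1 / 2 : ℝ)..1, f ((2 * x - 1 + 1) / 2) * walsh k (2 * x - 1) := by
    rw [← intervalIntegral.integral_const_mul]
    refine intervalIntegral.integral_congr_Ioo_of_le (by norm_num) fun x hx => ?_
    have hshift := walsh_add_one k (x := 2 * x - 1) (by linarith [hx.1])
    rw [sub_add_cancel] at hshift
    rw [walsh_bit, binDigit_one_of_half_le hx.1.le hx.2, hshift, sub_add_cancel,
      mul_div_cancel_left₀ x two_ne_zero]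
    cases b <;> simp
  rw [walshCoeff, ← intervalIntegral.integral_add_adjacent_intervals (b := 1 / 2)
    (hint.mono_set ?_) (hint.mono_set ?_), hleft, hright,
    intervalIntegral.integral_comp_mul_left (fun y => f (y / 2) * walsh k y) two_ne_zero,
    intervalIntegral.integral_comp_mul_sub (fun y => f ((y + 1) / 2) * walsh k y) two_ne_zero]
  · rw [mul_zero, mul_one_div_cancel two_ne_zero, sub_self, mul_one,
      show (2 : ℝ) - 1 = 1 by norm_num, smul_eq_mul, smul_eq_mul, walshCoeff, walshCoeff]
    ring
  all_goals
    rw [uIcc_of_le (by norm_num), uIcc_of_le (by norm_num)]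
    exact Icc_subset_Icc (by norm_num) (by norm_num)

open Real

theorem walshCoeff_exp_zero {a : ℝ} (ha : a ≠ 0) :
    walshCoeff (fun x => exp (a * x)) 0 = (exp a - 1) / a := by
  simp only [walshCoeff, walsh_zero, mul_one]
  rw [intervalIntegral.integral_comp_mul_left exp ha, integral_exp, mul_zero, mul_one, exp_zero,
    smul_eq_mul, inv_mul_eq_div]

theorem walshCoeff_exp_bit (a : ℝ) (b : Bool) (k : ℕ) :
    walshCoeff (fun x => exp (a * x)) (Nat.bit b k)
      = (1 + (if b then -1 else 1) * exp (a / 2)) / 2 *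
          walshCoeff (fun x => exp (a / 2 * x)) k := by
  have hcont : Continuous fun x => exp (a * x) := by fun_prop
  have hleft : (fun y => exp (a * (y / 2))) = fun y => exp (a / 2 * y) := by
    ext y; ring_nf
  have hright : walshCoeff (fun y => exp (a * ((y + 1) / 2))) k
      = exp (a / 2) * walshCoeff (fun y => exp (a / 2 * y)) k := by
    rw [walshCoeff, walshCoeff, ← intervalIntegral.integral_const_mul]
    congr 1; ext y
    rw [← mul_assoc, ← exp_add]; ring_nf
  rw [walshCoeff_bit (hcont.intervalIntegrable 0 1), hleft, hright]
  ring

/-- For a nonzero real `a`, `g(x) = exp (a x)`, and `k ∈ ℕ` with binary expansion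
`k = Σ_{i=1}^w κ_i 2^{i-1}`, `κ_w = 1` (and `w = 0` when `k = 0`), the `k`-th dyadic Walsh
coefficient of `g` equals
`((exp (a 2^{-w}) - 1) / a) ∏_{i=1}^w (1 + (-1)^{κ_i} exp (a 2^{-i}))`. -/
theorem walshCoeff_exp (a : ℝ) (ha : a ≠ 0) (k : ℕ) (w : ℕ) (hw : w = k.size) :
    walshCoeff (fun x => Real.exp (a * x)) k
      = ((Real.exp (a * (2:ℝ) ^ (-(w:ℤ))) - 1) / a)
        * ∏ i ∈ Finset.Icc 1 w,
            (1 + (-1 : ℝ) ^ (if k.testBit (i - 1) then 1 else 0)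
              * Real.exp (a * (2:ℝ) ^ (-(i:ℤ)))) := by
  subst hw
  induction k using Nat.binaryRec' generalizing a with
  | zero => simp [walshCoeff_exp_zero ha]
  | bit b k hb ih =>
    have hne : Nat.bit b k ≠ 0 := fun h => by
      obtain ⟨rfl, rfl⟩ := Nat.bit_eq_zero_iff.1 h
      simp at hb
    have hscale (j : ℕ) : a / 2 * (2 : ℝ) ^ (-(j : ℤ)) = a * 2 ^ (-((j + 1 : ℕ) : ℤ)) := by
      simp only [zpow_neg, zpow_natCast, pow_succ]; field_simp
    rw [walshCoeff_exp_bit, ih (a / 2) (div_ne_zero ha two_ne_zero), Nat.size_bit hne, hscale,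
      Finset.prod_Icc_one_eq_prod_range, Finset.prod_Icc_one_eq_prod_range,
      Finset.prod_range_succ']
    simp only [Nat.add_sub_cancel, Nat.testBit_bit_succ, Nat.testBit_bit_zero, hscale]
    have hhalf : a * (2 : ℝ) ^ (-((0 + 1 : ℕ) : ℤ)) = a / 2 := by norm_num [div_eq_mul_inv]
    rw [hhalf]
    cases b <;> simp only [Bool.false_eq_true, if_true, if_false, pow_zero, pow_one] <;> field_simp
end

section
/- Let P ⊂ [0,1)^s be a digital net with N = |P| points whose coordinates have finite binary expansion x_j = Σ_{i≥1} ζ_{i,j} 2^{-i}, and u_1,…,u_s > 0. Then W_u(P) = (1/N) Σ_{x∈P} ∏_{j=1}^s ∏_{i≥1} (1 + (−1)^{ζ_{i,j}} 2^{−(i+1−log₂ u_j)}) − 1. -/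
/-!
Expanding `∏ᵢ (1 + (-1)^{ζᵢ} 2^{-(i+1-log₂ u)})` over finite sets of digit positions, and indexing
those sets by natural numbers through their binary digits, gives the absolutely convergent Walsh
series `Σ_k wal_k(x) 2^{-μ_u(k)}`; multiplying over the coordinates gives the same series over
`k ∈ ℕ^s`. At a point of the net, `wal_k` is the sign of the linear form `h ↦ (Σⱼ Cⱼᵀ k⃗ⱼ) · h⃗`, so
averaging over the `2^m` points keeps exactly the terms with `k ∈ P^⊥`, and the term `k = 0` is `1`.
-/

open MeasureTheory

/-- The unit cube `[0,1)^s`. -/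
def unitCube (s : ℕ) : Set (Fin s → ℝ) := Set.univ.pi fun _ => Set.Ico (0:ℝ) 1

/-- The multivariate Walsh function `wal_k(x) = ∏_j wal_{k_j}(x_j)`. -/
noncomputable def mwalsh {s : ℕ} (k : Fin s → ℕ) (x : Fin s → ℝ) : ℝ :=
  ∏ j, walsh (k j) (x j)

/-- The `k`-th multivariate Walsh coefficient `f̂(k) = ∫_{[0,1)^s} f(x) wal_k(x) dx`. -/
noncomputable def mWalshCoeff {s : ℕ} (f : (Fin s → ℝ) → ℝ) (k : Fin s → ℕ) : ℝ :=
  ∫ x in unitCube s, f x * mwalsh k x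

/-- `μ_u(k) = Σ_{j=1}^s Σ_{i ≥ 1} (i + 1 - log₂ u_j) κ_{i,j}` for `k ∈ ℕ₀^s`. -/
noncomputable def muWeightS {s : ℕ} (u : Fin s → ℝ) (k : Fin s → ℕ) : ℝ :=
  ∑ j, muWeight (u j) (k j)

open scoped Classical

/-- A digital net over `𝔽₂` given by `s` generating matrices of size `n × m`. -/
structure DigitalNet (s n m : ℕ) where
  C : Fin s → Matrix (Fin n) (Fin m) (ZMod 2)

/-- The vector of the first `n` binary digits of a natural number. -/
def bitVec (n : ℕ) (k : ℕ) : Fin n → ZMod 2 := fun i => if k.testBit i then 1 else 0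

/-- The `h`-th point of a digital net: the `j`-th coordinate is
`x_j(h) = Σ_{i=1}^n y_{h,i,j} 2^{-i}` where `(y_{h,i,j})_i = C_j · h⃗`. -/
noncomputable def DigitalNet.point {s n m : ℕ} (D : DigitalNet s n m) (h : ℕ) :
    Fin s → ℝ :=
  fun j => ∑ i : Fin n,
    if (D.C j).mulVec (bitVec m h) i = 1 then (2:ℝ) ^ (-(i:ℤ) - 1) else 0

/-- The dual net `P^⊥ = {k ∈ ℕ₀^s : C_1ᵀ k⃗_1 + ⋯ + C_sᵀ k⃗_s = 0}`. -/
def DigitalNet.dual {s n m : ℕ} (D : DigitalNet s n m) : Set (Fin s → ℕ) :=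
  {k | ∑ j, (D.C j).transpose.mulVec (bitVec n (k j)) = 0}

/-- The QMC integration error of `f` by the digital net `D`:
`(1/2^m) Σ_{x ∈ P} f(x) - ∫_{[0,1)^s} f`. -/
noncomputable def qmcErr {s n m : ℕ} (f : (Fin s → ℝ) → ℝ) (D : DigitalNet s n m) : ℝ :=
  (∑ h ∈ Finset.range (2 ^ m), f (D.point h)) / (2 ^ m) - ∫ x in unitCube s, f x

/-- The generalized WAFOM `W_u(P) = Σ_{k ∈ P^⊥ \ {0}} 2^{-μ_u(k)}`. -/
noncomputable def Wafom {s n m : ℕ} (u : Fin s → ℝ) (D : DigitalNet s n m) : ℝ :=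
  ∑' k : Fin s → ℕ, if k ∈ D.dual ∧ k ≠ 0 then (2:ℝ) ^ (-muWeightS u k) else 0


open Finset

namespace Nat

theorem lt_size_of_testBit {k i : ℕ} (h : k.testBit i) : i < k.size :=
  lt_size.mpr (ge_two_pow_of_testBit h)

@[to_additive]
theorem prod_range_size_ite_testBit {M : Type*} [CommMonoid M] (k : ℕ) (f : ℕ → M) :
    ∏ i ∈ range k.size, (if k.testBit i then f i else 1) = ∏ i ∈ k.bitIndices.toFinset, f i := by
  rw [← prod_filter]
  congr 1
  ext i
  simpa using lt_size_of_testBit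

theorem testBit_sum_two_pow (T : Finset ℕ) (r : ℕ) :
    (∑ i ∈ T, 2 ^ i).testBit r = decide (r ∈ T) := by
  have h : r ∈ (∑ i ∈ T, 2 ^ i).bitIndices.toFinset ↔ r ∈ T := by
    rw [Finset.toFinset_bitIndices_sum_two_pow]
  rw [List.mem_toFinset, mem_bitIndices] at h
  rw [Bool.eq_iff_iff, decide_eq_true_iff, h]

end Nat

theorem hasSum_prod_bitIndices {R : Type*} [NormedCommRing R] [NormOneClass R] [CompleteSpace R]
    {f : ℕ → R} (hf : Summable (‖f ·‖)) :
    HasSum (fun k : ℕ => ∏ i ∈ k.bitIndices.toFinset, f i) (∏' i, (1 + f i)) := by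
  have hsum := summable_finsetProd_of_summable_norm hf
  rw [tprod_one_add hsum]
  exact (Finset.equivBitIndices.hasSum_iff (f := fun t => ∏ i ∈ t, f i)).mpr hsum.hasSum

theorem hasSum_pi_prod {β : Type*} {s : ℕ} {f : Fin s → β → ℝ} (hf : ∀ j, Summable (‖f j ·‖)) :
    HasSum (fun k : Fin s → β => ∏ j, f j (k j)) (∏ j, ∑' b, f j b) := by
  induction s with
  | zero => simp
  | succ s ih =>
    have htail := ih fun j => hf j.succ
    have htail_norm : Summable fun k : Fin s → β => ‖∏ j : Fin s, f j.succ (k j)‖ := by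
      have := (ih (f := fun j b => ‖f j.succ b‖) fun j => by simpa using hf j.succ).summable
      simpa only [norm_prod] using this
    have hprod := summable_mul_of_summable_norm (hf 0) htail_norm
    have hmul := (hf 0).of_norm.hasSum.mul htail hprod
    have hcons : (fun k : Fin (s + 1) → β => ∏ j, f j (k j)) ∘ Fin.consEquiv (fun _ => β) =
        fun p => f 0 p.1 * ∏ j : Fin s, f j.succ (p.2 j) := by
      funext p
      simp [Fin.consEquiv, Fin.prod_univ_succ]
    rw [← (Fin.consEquiv fun _ => β).hasSum_iff, hcons, Fin.prod_univ_succ]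
    exact hmul

theorem binDigit_natCast_div_two_pow (a n i : ℕ) :
    binDigit ((a : ℝ) / 2 ^ n) i = (decide (i ≤ n) && a.testBit (n - i)).toNat := by
  have hcast : (a : ℝ) / 2 ^ n * 2 ^ i = ((a * 2 ^ i : ℕ) : ℝ) / ((2 ^ n : ℕ) : ℝ) := by
    push_cast
    ring
  rw [binDigit, hcast, Int.floor_div_natCast, Int.floor_natCast, ← Int.natCast_div,
    Int.toNat_natCast, ← Nat.toNat_testBit, Nat.testBit_mul_two_pow]

/- With `S ⊆ range n`, the number is `a / 2 ^ n` for `a = Σ_{i ∈ S} 2 ^ (n - 1 - i)`,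
whose binary digits are those of `S` in reverse order. -/
theorem binDigit_sum_zpow_two (S : Finset ℕ) (t : ℕ) :
    binDigit (∑ i ∈ S, (2:ℝ) ^ (-(i:ℤ) - 1)) (t + 1) = if t ∈ S then 1 else 0 := by
  obtain ⟨n, hn⟩ := S.exists_nat_subset_range
  have hlt {i} (hi : i ∈ S) : i < n := mem_range.mp (hn hi)
  have hsum : ∑ i ∈ S, (2:ℝ) ^ (-(i:ℤ) - 1) = ((∑ i ∈ S, 2 ^ (n - 1 - i) : ℕ) : ℝ) / 2 ^ n := by
    push_cast
    rw [sum_div]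
    refine sum_congr rfl fun i hi => ?_
    rw [eq_div_iff (by positivity), ← zpow_natCast, ← zpow_natCast, ← zpow_add₀ two_ne_zero]
    have := hlt hi
    congr 1
    omega
  have hinj : Set.InjOn (fun i => n - 1 - i) S := fun i hi i' hi' h => by
    have := hlt hi
    have := hlt hi'
    simp only at h
    omega
  rw [hsum, binDigit_natCast_div_two_pow, ← sum_image hinj, Nat.testBit_sum_two_pow]
  by_cases ht : t ∈ S
  · have := hlt ht
    simpa [ht, show t + 1 ≤ n by omega] using ⟨t, ht, by omega⟩
  · have : ¬ (t + 1 ≤ n ∧ ∃ a ∈ S, n - 1 - a = n - (t + 1)) := by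
      rintro ⟨htn, a, ha, h⟩
      have := hlt ha
      exact ht (by rwa [show t = a by omega])
    simpa [ht] using this

theorem walsh_sum_zpow_two (S : Finset ℕ) (k : ℕ) :
    walsh k (∑ i ∈ S, (2:ℝ) ^ (-(i:ℤ) - 1)) = (-1) ^ #(k.bitIndices.toFinset ∩ S) := by
  simp only [walsh, Nat.prod_range_size_ite_testBit, binDigit_sum_zpow_two, pow_ite, pow_one,
    pow_zero]
  rw [prod_ite_mem, prod_const]

theorem walsh_mul_rpow_neg_muWeight (u x : ℝ) (k : ℕ) :
    walsh k x * (2:ℝ) ^ (-muWeight u k) = ∏ i ∈ k.bitIndices.toFinset,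
      (-1 : ℝ) ^ binDigit x (i + 1) * (2:ℝ) ^ (-((i : ℝ) + 2 - Real.logb 2 u)) := by
  rw [walsh, muWeight, Nat.prod_range_size_ite_testBit, Nat.sum_range_size_ite_testBit,
    ← sum_neg_distrib, Real.rpow_sum_of_pos two_pos, prod_mul_distrib]

theorem summable_norm_digit_weight (u x : ℝ) :
    Summable fun i : ℕ =>
      ‖(-1 : ℝ) ^ binDigit x (i + 1) * (2:ℝ) ^ (-((i : ℝ) + 2 - Real.logb 2 u))‖ := by
  refine (summable_geometric_two.mul_left ((2:ℝ) ^ (Real.logb 2 u - 2))).congr fun i => ?_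
  rw [norm_mul, norm_pow, norm_neg, norm_one, one_pow, one_mul,
    Real.norm_of_nonneg (Real.rpow_nonneg zero_le_two _), div_pow, one_pow, one_div,
    ← Real.rpow_natCast, ← Real.rpow_neg zero_le_two, ← Real.rpow_add two_pos]
  ring_nf

theorem hasSum_walsh_mul_rpow_neg_muWeight (u x : ℝ) :
    HasSum (fun k => walsh k x * (2:ℝ) ^ (-muWeight u k)) (∏' i : ℕ,
      (1 + (-1 : ℝ) ^ binDigit x (i + 1) * (2:ℝ) ^ (-((i : ℝ) + 2 - Real.logb 2 u)))) := by
  simp only [walsh_mul_rpow_neg_muWeight]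
  exact hasSum_prod_bitIndices (summable_norm_digit_weight u x)

theorem summable_norm_walsh_mul_rpow_neg_muWeight (u x : ℝ) :
    Summable fun k => ‖walsh k x * (2:ℝ) ^ (-muWeight u k)‖ := by
  simp only [walsh_mul_rpow_neg_muWeight, norm_prod]
  have := hasSum_prod_bitIndices (f := fun i =>
    ‖(-1 : ℝ) ^ binDigit x (i + 1) * (2:ℝ) ^ (-((i : ℝ) + 2 - Real.logb 2 u))‖)
    (by simpa only [norm_norm] using summable_norm_digit_weight u x)
  exact this.summable

theorem hasSum_mwalsh_mul_rpow_neg_muWeightS {s : ℕ} (u x : Fin s → ℝ) :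
    HasSum (fun k => mwalsh k x * (2:ℝ) ^ (-muWeightS u k)) (∏ j, ∏' i : ℕ,
      (1 + (-1 : ℝ) ^ binDigit (x j) (i + 1) * (2:ℝ) ^ (-((i : ℝ) + 2 - Real.logb 2 (u j))))) := by
  have hfactor (k : Fin s → ℕ) : mwalsh k x * (2:ℝ) ^ (-muWeightS u k) =
      ∏ j, walsh (k j) (x j) * (2:ℝ) ^ (-muWeight (u j) (k j)) := by
    rw [mwalsh, muWeightS, ← sum_neg_distrib, Real.rpow_sum_of_pos two_pos, prod_mul_distrib]
  have := hasSum_pi_prod fun j => summable_norm_walsh_mul_rpow_neg_muWeight (u j) (x j)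
  simpa only [← hfactor, (hasSum_walsh_mul_rpow_neg_muWeight _ _).tsum_eq] using this

theorem AddChar.map_sum_eq_prod {ι A M : Type*} [AddCommMonoid A] [CommMonoid M]
    (ψ : AddChar A M) (s : Finset ι) (f : ι → A) : ψ (∑ i ∈ s, f i) = ∏ i ∈ s, ψ (f i) := by
  classical
  induction s using Finset.induction_on with
  | empty => simp
  | insert a s ha ih => rw [sum_insert ha, prod_insert ha, map_add_eq_mul, ih]

noncomputable def signChar : AddChar (ZMod 2) ℝ :=
  AddChar.zmodChar 2 (by norm_num : (-1 : ℝ) ^ 2 = 1)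

theorem signChar_natCast (a : ℕ) : signChar a = (-1) ^ a := AddChar.zmodChar_apply' _ a

theorem signChar_one : signChar 1 = -1 := by simpa using signChar_natCast 1

theorem signChar_eq_one_iff (z : ZMod 2) : signChar z = 1 ↔ z = 0 := by
  obtain rfl | rfl : z = 0 ∨ z = 1 := by revert z; decide
  · simp
  · norm_num [signChar_one]

theorem sum_signChar_dotProduct {m : ℕ} (V : Fin m → ZMod 2) :
    ∑ w, signChar (V ⬝ᵥ w) = if V = 0 then (2:ℝ) ^ m else 0 := by
  let ψ : AddChar (Fin m → ZMod 2) ℝ :=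
    signChar.compAddMonoidHom (AddMonoidHom.mk' (V ⬝ᵥ ·) (dotProduct_add V))
  have hψ : ψ = 0 ↔ V = 0 := by
    refine ⟨fun h => funext fun i => ?_, fun h => by ext w; simp [ψ, h]⟩
    have := DFunLike.congr_fun h (Pi.single i 1)
    simpa [ψ, signChar_eq_one_iff] using this
  have := AddChar.sum_eq_ite ψ
  simp only [hψ, Fintype.card_fun, ZMod.card, Fintype.card_fin] at this
  simpa [ψ] using this

theorem sum_range_two_pow_bitVec {M : Type*} [AddCommMonoid M] (m : ℕ)
    (g : (Fin m → ZMod 2) → M) : ∑ h ∈ range (2 ^ m), g (bitVec m h) = ∑ w, g w := by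
  have hbits (a : Fin (2 ^ m)) : bitVec m a = finFunctionFinEquiv.symm a := by
    funext i
    apply Fin.ext
    rw [finFunctionFinEquiv_symm_apply_val, ← Nat.toNat_testBit, bitVec]
    split_ifs with hb <;> simp [hb] <;> rfl
  rw [← Fin.sum_univ_eq_sum_range (fun h => g (bitVec m h))]
  simp only [hbits]
  exact finFunctionFinEquiv.symm.sum_comp (g : (Fin m → Fin 2) → M)

def digitSet {n : ℕ} (v : Fin n → ZMod 2) : Finset ℕ :=
  (univ.filter (v · = 1)).map Fin.valEmbedding

theorem signChar_bitVec_dotProduct {n : ℕ} (k : ℕ) (v : Fin n → ZMod 2) :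
    signChar (bitVec n k ⬝ᵥ v) = (-1) ^ #(k.bitIndices.toFinset ∩ digitSet v) := by
  have hterm (i : Fin n) : bitVec n k i * v i = if k.testBit i ∧ v i = 1 then 1 else 0 := by
    unfold bitVec
    obtain hv | hv : v i = 0 ∨ v i = 1 := by generalize v i = z; revert z; decide
    all_goals by_cases hk : k.testBit i <;> simp [hv, hk]
  have hfilter : (univ.filter fun i : Fin n => k.testBit i ∧ v i = 1).map Fin.valEmbedding =
      k.bitIndices.toFinset ∩ digitSet v := by
    ext i
    simp only [digitSet, mem_map, mem_filter, mem_univ, true_and, Fin.valEmbedding_apply,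
      mem_inter, List.mem_toFinset, Nat.mem_bitIndices]
    constructor
    · rintro ⟨a, ⟨hk, hv⟩, rfl⟩
      exact ⟨hk, a, hv, rfl⟩
    · rintro ⟨hk, a, hv, rfl⟩
      exact ⟨a, ⟨hk, hv⟩, rfl⟩
  rw [dotProduct, sum_congr rfl fun i _ => hterm i, sum_boole, signChar_natCast, ← hfilter,
    card_map]

namespace DigitalNet

variable {s n m : ℕ} (D : DigitalNet s n m)

theorem point_eq_sum_digitSet (h : ℕ) (j : Fin s) :
    D.point h j = ∑ i ∈ digitSet ((D.C j).mulVec (bitVec m h)), (2:ℝ) ^ (-(i:ℤ) - 1) := by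
  rw [point, digitSet, sum_map, sum_filter]
  rfl

theorem walsh_point (h k : ℕ) (j : Fin s) :
    walsh k (D.point h j) = signChar (bitVec n k ⬝ᵥ (D.C j).mulVec (bitVec m h)) := by
  rw [point_eq_sum_digitSet, walsh_sum_zpow_two, signChar_bitVec_dotProduct]

theorem mwalsh_point (h : ℕ) (k : Fin s → ℕ) :
    mwalsh k (D.point h) =
      signChar ((∑ j, (D.C j).transpose.mulVec (bitVec n (k j))) ⬝ᵥ bitVec m h) := by
  simp only [mwalsh, walsh_point, sum_dotProduct, AddChar.map_sum_eq_prod,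
    Matrix.dotProduct_mulVec, Matrix.mulVec_transpose]

theorem sum_mwalsh_point (k : Fin s → ℕ) :
    ∑ h ∈ range (2 ^ m), mwalsh k (D.point h) = if k ∈ D.dual then (2:ℝ) ^ m else 0 := by
  simp only [mwalsh_point]
  rw [sum_range_two_pow_bitVec m (fun w => signChar (_ ⬝ᵥ w)), sum_signChar_dotProduct]
  exact if_congr Iff.rfl rfl rfl

theorem zero_mem_dual : 0 ∈ D.dual := by
  have : bitVec n 0 = 0 := funext fun i => by simp [bitVec]
  simp [dual, this]

theorem hasSum_ite_mem_dual (u : Fin s → ℝ) :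
    HasSum (fun k => if k ∈ D.dual then (2:ℝ) ^ (-muWeightS u k) else 0)
      ((∑ h ∈ range (2 ^ m), ∏ j, ∏' i : ℕ, (1 + (-1 : ℝ) ^ binDigit (D.point h j) (i + 1)
        * (2:ℝ) ^ (-((i : ℝ) + 2 - Real.logb 2 (u j))))) / 2 ^ m) := by
  have := (hasSum_sum fun h (_ : h ∈ range (2 ^ m)) =>
    hasSum_mwalsh_mul_rpow_neg_muWeightS u (D.point h)).div_const (2 ^ m)
  simp only [← sum_mul, sum_mwalsh_point, ite_mul, zero_mul] at this
  have hterm : (fun k => (if k ∈ D.dual then 2 ^ m * 2 ^ (-muWeightS u k) else 0) / 2 ^ m) =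
      fun k => if k ∈ D.dual then (2:ℝ) ^ (-muWeightS u k) else 0 := by
    funext k
    split_ifs <;> simp
  rwa [hterm] at this

end DigitalNet

theorem muWeightS_zero {s : ℕ} (u : Fin s → ℝ) : muWeightS u 0 = 0 := by
  simp [muWeightS, muWeight]

theorem wafom_formula_general {s n m : ℕ} (D : DigitalNet s n m)
    (u : Fin s → ℝ) :
    Wafom u D
      = (∑ h ∈ Finset.range (2 ^ m), ∏ j,
          ∏' i : ℕ,
            (1 + (-1 : ℝ) ^ (binDigit (D.point h j) (i + 1))
              * (2:ℝ) ^ (-((i : ℝ) + 2 - Real.logb 2 (u j))))) / (2 ^ m) - 1 := by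
  have hsum := (D.hasSum_ite_mem_dual u).update 0 0
  simp only [D.zero_mem_dual, if_true, muWeightS_zero, neg_zero, Real.rpow_zero] at hsum
  have hterm : (fun k => if k ∈ D.dual ∧ k ≠ 0 then (2:ℝ) ^ (-muWeightS u k) else 0) =
      Function.update (fun k => if k ∈ D.dual then (2:ℝ) ^ (-muWeightS u k) else 0) 0 0 := by
    funext k
    by_cases hk : k = 0 <;> simp [hk, Function.update]
  rw [Wafom, hterm, hsum.tsum_eq]
  ring

/-- Computable formula for the generalized WAFOM:
`W_u(P) = (1/N) Σ_{x ∈ P} ∏_{j=1}^s ∏_{i ≥ 1} (1 + (-1)^{ζ_{i,j}} 2^{-(i+1-log₂ u_j)}) - 1`,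
where `ζ_{i,j}` are the binary digits of the coordinates of the points of `P`. -/
theorem wafom_formula {s n m : ℕ} (hnm : m ≤ n) (D : DigitalNet s n m)
    (u : Fin s → ℝ) (hu : ∀ j, 0 < u j) :
    Wafom u D
      = (∑ h ∈ Finset.range (2 ^ m), ∏ j,
          ∏' i : ℕ,
            (1 + (-1 : ℝ) ^ (binDigit (D.point h j) (i + 1))
              * (2:ℝ) ^ (-((i : ℝ) + 2 - Real.logb 2 (u j))))) / (2 ^ m) - 1 :=
  wafom_formula_general D u
end
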